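/- For every fixed t ∈ [0,1], both functions λ ↦ s_a(λ,t) and λ ↦ s_c(λ,t) are nonincreasing on [0,1]. -/
import Mathlib


noncomputable section

/-- `Λ = (1-λ)(1+3λ)`. -/
def Lambda (lam : ℝ) : ℝ := (1 - lam) * (1 + 3 * lam)

/-- `s_a(λ,t) = (1/2)(1 - λ + √(Λ + 4t²λ²))`. -/
def sA (lam t : ℝ) : ℝ :=
  (1 / 2) * (1 - lam + Real.sqrt (Lambda lam + 4 * t ^ 2 * lam ^ 2))

/-- `s_c(λ,t) = (1/2)(1 - λ + √Λ)√(1-t²)`. -/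
def sC (lam t : ℝ) : ℝ :=
  (1 / 2) * (1 - lam + Real.sqrt (Lambda lam)) * Real.sqrt (1 - t ^ 2)

end

lemma key_sqrt (c lam : ℝ) (hl : 0 ≤ lam) (hl1 : lam ≤ 1) (hc : -1 ≤ c) (hc3 : c ≤ 3) :
    1 - c * lam ≤ Real.sqrt (1 + 2 * lam - c * lam ^ 2) := by
  rcases le_or_gt (1 - c * lam) 0 with h | h
  · exact h.trans (Real.sqrt_nonneg _)
  · rw [show (1 : ℝ) - c * lam = Real.sqrt ((1 - c*lam)^2) from (Real.sqrt_sq h.le).symm]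
    apply Real.sqrt_le_sqrt
    nlinarith [mul_nonneg (mul_nonneg (by linarith : (0:ℝ) ≤ 1 + c) (by nlinarith : (0:ℝ) ≤ 2 - c*lam)) hl]

lemma fnonneg (c lam : ℝ) (hl : 0 ≤ lam) (hl1 : lam ≤ 1) (hc3 : c ≤ 3) :
    0 ≤ 1 + 2 * lam - c * lam ^ 2 := by nlinarith [sq_nonneg lam]

lemma anti_aux (c : ℝ) (hc : -1 ≤ c) (hc3 : c ≤ 3) :
    AntitoneOn (fun lam => 1 - lam + Real.sqrt (1 + 2 * lam - c * lam ^ 2)) (Set.Icc (0:ℝ) 1) := by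
  rintro a ⟨ha0, ha1⟩ b ⟨hb0, hb1⟩ hab
  simp only
  have hfa := fnonneg c a ha0 ha1 hc3
  have hfb := fnonneg c b hb0 hb1 hc3
  have hA := Real.sq_sqrt hfa
  have hAnn := Real.sqrt_nonneg (1 + 2 * a - c * a ^ 2)
  have hkey := key_sqrt c a ha0 ha1 hc hc3
  have h1 : Real.sqrt (1 + 2 * b - c * b ^ 2) ≤ Real.sqrt (1 + 2 * a - c * a ^ 2) + (b - a) := by
    rw [show Real.sqrt (1 + 2 * a - c * a ^ 2) + (b - a)
        = Real.sqrt ((Real.sqrt (1 + 2 * a - c * a ^ 2) + (b - a))^2) from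
        (Real.sqrt_sq (by nlinarith)).symm]
    apply Real.sqrt_le_sqrt
    nlinarith [sq_nonneg (b - a)]
  linarith

/-- For every fixed `t ∈ [0,1]`, both `λ ↦ s_a(λ,t)` and `λ ↦ s_c(λ,t)` are nonincreasing
on `[0,1]`. -/
theorem sA_sC_antitoneOn (t : ℝ) (ht : t ∈ Set.Icc (0 : ℝ) 1) :
    AntitoneOn (fun lam => sA lam t) (Set.Icc 0 1) ∧
    AntitoneOn (fun lam => sC lam t) (Set.Icc 0 1) := by
  obtain ⟨ht0, ht1⟩ := ht
  constructor
  · have h := anti_aux (3 - 4 * t ^ 2) (by nlinarith) (by nlinarith)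
    intro a ha b hb hab
    have := h ha hb hab
    simp only [sA, Lambda]
    have e : ∀ x : ℝ, (1 - x) * (1 + 3 * x) + 4 * t ^ 2 * x ^ 2
        = 1 + 2 * x - (3 - 4 * t ^ 2) * x ^ 2 := by intro x; ring
    rw [e, e]
    simp only at this
    linarith
  · have h := anti_aux 3 (by norm_num) (by norm_num)
    intro a ha b hb hab
    have := h ha hb hab
    simp only [sC, Lambda]
    have e : ∀ x : ℝ, (1 - x) * (1 + 3 * x) = 1 + 2 * x - 3 * x ^ 2 := by intro x; ring
    rw [e, e]
    simp only at this
    have hs := Real.sqrt_nonneg (1 - t ^ 2)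
    nlinarith
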